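/- arXiv:2405.18833 — 4 statements merged into one kernel-verified Lean document; each statement's English description precedes it below -/
import Mathlib

section
/- In Construction 1, all perfect matchings have pairwise distinct weights: for any integer n ≥ 1 and any two distinct bijections σ, τ from {0,…,n−1} to {1,…,n}, one has Σ_{i=0}^{n−1} ‖u_i − v_{σ(i)}‖ ≠ Σ_{i=0}^{n−1} ‖u_i − v_{τ(i)}‖. -/
/-!
The edge `u_i v_{σ(i)+1}` has length `√(q² + d²)` for the gap `d = (σ(i)+1)n - i`, which lies in
`[1, n²]` and determines both `i` and `σ(i)`; so a matching is determined by its set of gaps, and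
its weight is the sum of `√(q² + d²)` over that set. For distinct `s, t ≤ n²` the product
`(q² + s²)(q² + t²)` lies strictly between two consecutive squares, so these square roots have
pairwise distinct squarefree parts. Square roots of distinct squarefree integers are linearly
independent over `ℚ`: by induction on a finite set `P` of primes, `√p ∉ ℚ(√p' : p' ∈ P)` for a prime
`p ∉ P`, and every element of `ℚ(√p' : p' ∈ P ∪ {q})` is `x + y√q` with `x, y ∈ ℚ(√p' : p' ∈ P)`.
Hence different gap sets give different weights.
-/

open scoped BigOperators

/-- A point of `ℝ²` from two coordinates. -/
noncomputable def mk2 (x y : ℝ) : EuclideanSpace ℝ (Fin 2) :=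
  (WithLp.equiv 2 (Fin 2 → ℝ)).symm ![x, y]

/-- Construction 1: the left-hand point `u_i = (0, i)`, for `0 ≤ i ≤ n-1`. -/
noncomputable def uPt (i : ℕ) : EuclideanSpace ℝ (Fin 2) := mk2 0 (i : ℝ)

/-- Construction 1: the right-hand point `v_j = (n⁴, j·n)`, for `1 ≤ j ≤ n`. -/
noncomputable def vPt (n j : ℕ) : EuclideanSpace ℝ (Fin 2) := mk2 ((n : ℝ) ^ 4) ((j : ℝ) * n)

/-- The weight of the perfect matching of Construction 1 that matches `u_i` with
`v_{σ(i)+1}`; as `σ` ranges over permutations of `Fin n`, `i ↦ σ(i)+1` ranges over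
all bijections from `{0,…,n-1}` to `{1,…,n}`. -/
noncomputable def matchWeight (n : ℕ) (σ : Equiv.Perm (Fin n)) : ℝ :=
  ∑ i : Fin n, ‖uPt (i : ℕ) - vPt n ((σ i : ℕ) + 1)‖

open Real Finset

namespace Subfield

variable {K : Type*} [Field K]

def adjoinSqrt (F : Subfield K) (r : K) (hr : r ^ 2 ∈ F) : Subfield K where
  carrier := {z | ∃ x ∈ F, ∃ y ∈ F, z = x + y * r}
  zero_mem' := ⟨0, F.zero_mem, 0, F.zero_mem, by ring⟩
  one_mem' := ⟨1, F.one_mem, 0, F.zero_mem, by ring⟩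
  add_mem' := by
    rintro _ _ ⟨x, hx, y, hy, rfl⟩ ⟨x', hx', y', hy', rfl⟩
    exact ⟨x + x', F.add_mem hx hx', y + y', F.add_mem hy hy', by ring⟩
  neg_mem' := by
    rintro _ ⟨x, hx, y, hy, rfl⟩
    exact ⟨-x, F.neg_mem hx, -y, F.neg_mem hy, by ring⟩
  mul_mem' := by
    rintro _ _ ⟨x, hx, y, hy, rfl⟩ ⟨x', hx', y', hy', rfl⟩
    exact ⟨x * x' + y * y' * r ^ 2, by aesop, x * y' + y * x', by aesop, by ring⟩
  inv_mem' := by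
    rintro _ ⟨x, hx, y, hy, rfl⟩
    by_cases hrF : r ∈ F
    · exact ⟨(x + y * r)⁻¹, by aesop, 0, F.zero_mem, by ring⟩
    rcases eq_or_ne y 0 with rfl | hy0
    · exact ⟨x⁻¹, F.inv_mem hx, 0, F.zero_mem, by ring⟩
    -- the norm `x² - r²y²` of `x + y r` vanishes only if `r = ± x / y ∈ F`
    have hN : x ^ 2 - r ^ 2 * y ^ 2 ≠ 0 := by
      intro hN
      have : (x / y) ^ 2 = r ^ 2 := by field_simp; linear_combination hN
      rcases sq_eq_sq_iff_eq_or_eq_neg.mp this with h | h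
      · exact hrF (h ▸ F.div_mem hx hy)
      · exact hrF (neg_neg r ▸ h ▸ F.neg_mem (F.div_mem hx hy))
    refine ⟨x / (x ^ 2 - r ^ 2 * y ^ 2), by aesop, -y / (x ^ 2 - r ^ 2 * y ^ 2), by aesop,
      inv_eq_of_mul_eq_one_right ?_⟩
    rw [← div_self hN]
    ring

theorem exists_eq_add_mul_of_mem_closure_insert {s : Set K} {r z : K}
    (hr : r ^ 2 ∈ closure s) (hz : z ∈ closure (insert r s)) :
    ∃ x ∈ closure s, ∃ y ∈ closure s, z = x + y * r := by
  have hle : closure (insert r s) ≤ adjoinSqrt (closure s) r hr := by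
    rw [closure_le, Set.insert_subset_iff]
    refine ⟨⟨0, zero_mem _, 1, one_mem _, by ring⟩, fun a ha => ?_⟩
    exact ⟨a, subset_closure ha, 0, zero_mem _, by ring⟩
  exact hle hz

theorem eq_zero_or_eq_zero_of_sq_mem [NeZero (2 : K)] {F : Subfield K} {r x y : K}
    (hr : r ∉ F) (hr2 : r ^ 2 ∈ F) (hx : x ∈ F) (hy : y ∈ F) (h : (x + y * r) ^ 2 ∈ F) :
    x = 0 ∨ y = 0 := by
  by_contra! hxy
  apply hr
  have : r = ((x + y * r) ^ 2 - x ^ 2 - y ^ 2 * r ^ 2) / (2 * x * y) := by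
    field_simp [hxy.1, hxy.2]
    ring
  rw [this]
  have hr2y : y ^ 2 * r ^ 2 ∈ F := F.mul_mem (F.pow_mem hy 2) hr2
  exact F.div_mem (F.sub_mem (F.sub_mem h (F.pow_mem hx 2)) hr2y)
    (F.mul_mem (F.mul_mem (ofNat_mem F 2) hx) hy)

end Subfield

noncomputable def sqrtField (P : Finset ℕ) : Subfield ℝ :=
  Subfield.closure ((fun p : ℕ => √(p : ℝ)) '' P)

theorem sqrt_mem_sqrtField {P : Finset ℕ} {p : ℕ} (hp : p ∈ P) : √(p : ℝ) ∈ sqrtField P :=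
  Subfield.subset_closure ⟨p, hp, rfl⟩

theorem even_padicValNat_of_isSquare {m : ℕ} (hm : IsSquare m) (p : ℕ) [Fact p.Prime] :
    Even (padicValNat p m) := by
  obtain ⟨k, rfl⟩ := hm
  rcases eq_or_ne k 0 with rfl | hk
  · simp
  · exact ⟨_, padicValNat.mul hk hk⟩

theorem isSquare_of_sqrt_mem_sqrtField_empty {m : ℕ} (hm : √(m : ℝ) ∈ sqrtField ∅) :
    IsSquare m := by
  have hle : sqrtField ∅ ≤ (Rat.castHom ℝ).fieldRange := by
    simp [sqrtField]
  obtain ⟨r, hr⟩ := RingHom.mem_fieldRange.mp (hle hm)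
  by_contra h
  exact (irrational_sqrt_natCast_iff.mpr h).ne_rat r hr.symm

theorem sqrtField_insert (P : Finset ℕ) (q : ℕ) :
    sqrtField (insert q P) =
      Subfield.closure (insert √(q : ℝ) ((fun p : ℕ => √(p : ℝ)) '' P)) := by
  rw [sqrtField, coe_insert, Set.image_insert_eq]

theorem even_padicValNat_of_sqrt_mem_sqrtField {P : Finset ℕ} (hP : ∀ q ∈ P, q.Prime)
    {m : ℕ} (hm : √(m : ℝ) ∈ sqrtField P) {p : ℕ} [Fact p.Prime] (hpP : p ∉ P) :
    Even (padicValNat p m) := by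
  induction P using Finset.induction_on generalizing m p with
  | empty => exact even_padicValNat_of_isSquare (isSquare_of_sqrt_mem_sqrtField_empty hm) p
  | @insert q P hqP ih =>
    have hq : q.Prime := hP q (mem_insert_self q P)
    have hP' : ∀ q ∈ P, q.Prime := fun q hq => hP q (mem_insert_of_mem hq)
    have hpP' : p ∉ P := fun h => hpP (mem_insert_of_mem h)
    have hpq : p ≠ q := fun h => hpP (h ▸ mem_insert_self q P)
    have hq_sq : √(q : ℝ) ^ 2 ∈ sqrtField P := by
      rw [sq_sqrt (Nat.cast_nonneg q)]; exact natCast_mem _ q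
    have hq_not_mem : √(q : ℝ) ∉ sqrtField P := fun h => by
      have := Fact.mk hq
      simpa [padicValNat.self hq.one_lt] using ih hP' h hqP
    obtain ⟨x, hx, y, hy, hxy⟩ :=
      Subfield.exists_eq_add_mul_of_mem_closure_insert hq_sq (sqrtField_insert P q ▸ hm)
    have hm_sq : (x + y * √(q : ℝ)) ^ 2 ∈ sqrtField P := by
      rw [← hxy, sq_sqrt (Nat.cast_nonneg m)]; exact natCast_mem _ m
    rcases Subfield.eq_zero_or_eq_zero_of_sq_mem hq_not_mem hq_sq hx hy hm_sq with rfl | rfl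
    · -- `√m = y √q`, so `√(m q) = y q ∈ sqrtField P`, and `q` contributes nothing at `p ≠ q`
      have hmq : √((m * q : ℕ) : ℝ) ∈ sqrtField P := by
        rw [Nat.cast_mul, sqrt_mul (Nat.cast_nonneg m), hxy, zero_add, mul_assoc,
          mul_self_sqrt (Nat.cast_nonneg q)]
        exact Subfield.mul_mem _ hy (natCast_mem _ q)
      rcases eq_or_ne m 0 with rfl | hm0
      · simp
      have := Fact.mk hq
      have := ih hP' hmq hpP'
      rwa [padicValNat.mul hm0 hq.ne_zero, padicValNat_primes hpq, add_zero] at this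
    · rw [zero_mul, add_zero] at hxy
      exact ih hP' (hxy ▸ hx) hpP'

theorem sqrt_prime_not_mem_sqrtField {P : Finset ℕ} (hP : ∀ p ∈ P, p.Prime) {q : ℕ}
    (hq : q.Prime) (hqP : q ∉ P) : √(q : ℝ) ∉ sqrtField P := by
  have := Fact.mk hq
  intro h
  simpa [padicValNat.self hq.one_lt] using even_padicValNat_of_sqrt_mem_sqrtField hP h hqP

theorem sqrt_prod_mem_sqrtField {P S : Finset ℕ} (hS : S ⊆ P) :
    √((∏ p ∈ S, p : ℕ) : ℝ) ∈ sqrtField P := by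
  rw [Nat.cast_prod, Real.sqrt_prod _ fun p _ => Nat.cast_nonneg p]
  exact Subfield.prod_mem _ fun p hp => sqrt_mem_sqrtField (hS hp)

theorem eq_zero_of_sum_mul_sqrt_prod_eq_zero {P : Finset ℕ} (hP : ∀ p ∈ P, p.Prime)
    {c : Finset ℕ → ℚ} (h : ∑ S ∈ P.powerset, (c S : ℝ) * √((∏ p ∈ S, p : ℕ) : ℝ) = 0) :
    ∀ S ∈ P.powerset, c S = 0 := by
  induction P using Finset.induction_on generalizing c with
  | empty => simpa using h
  | @insert q P hqP ih =>
    have hP' : ∀ p ∈ P, p.Prime := fun p hp => hP p (mem_insert_of_mem hp)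
    set A := ∑ S ∈ P.powerset, (c S : ℝ) * √((∏ p ∈ S, p : ℕ) : ℝ)
    set B := ∑ S ∈ P.powerset, (c (insert q S) : ℝ) * √((∏ p ∈ S, p : ℕ) : ℝ)
    have hAB : A + B * √(q : ℝ) = 0 := by
      rw [← h, sum_powerset_insert hqP, sum_mul]
      congr 1
      refine sum_congr rfl fun S hS => ?_
      rw [prod_insert fun hq => hqP (mem_powerset.mp hS hq), Nat.cast_mul,
        sqrt_mul (Nat.cast_nonneg q)]
      ring
    have mem : ∀ d : Finset ℕ → ℚ,
        ∑ S ∈ P.powerset, (d S : ℝ) * √((∏ p ∈ S, p : ℕ) : ℝ) ∈ sqrtField P :=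
      fun d => Subfield.sum_mem _ fun S hS => Subfield.mul_mem _ (SubfieldClass.ratCast_mem _ _)
        (sqrt_prod_mem_sqrtField (mem_powerset.mp hS))
    have hB : B = 0 := by
      by_contra hB
      apply sqrt_prime_not_mem_sqrtField hP' (hP q (mem_insert_self q P)) hqP
      rw [show √(q : ℝ) = -A / B by field_simp; linarith]
      exact Subfield.div_mem _ (Subfield.neg_mem _ (mem c)) (mem _)
    have hA : A = 0 := by simpa [hB] using hAB
    intro S hS
    rw [mem_powerset, subset_insert_iff] at hS
    by_cases hqS : q ∈ S
    · rw [← insert_erase hqS]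
      exact ih hP' hB _ (mem_powerset.mpr hS)
    · rw [erase_eq_of_notMem hqS] at hS
      exact ih hP' hA _ (mem_powerset.mpr hS)

theorem linearIndepOn_sqrt_squarefree :
    LinearIndepOn ℚ (fun m : ℕ => √(m : ℝ)) {m | Squarefree m} := by
  rw [linearIndepOn_iff'']
  intro t g ht hg hsum
  have hP : ∀ p ∈ t.biUnion Nat.primeFactors, p.Prime := fun p hp => by
    obtain ⟨m, -, hpm⟩ := mem_biUnion.mp hp
    exact Nat.prime_of_mem_primeFactors hpm
  have hprod : ∀ m ∈ t, ∏ p ∈ m.primeFactors, p = m := fun m hm =>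
    Nat.prod_primeFactors_of_squarefree (ht hm)
  have key := eq_zero_of_sum_mul_sqrt_prod_eq_zero hP (c := fun S => g (∏ p ∈ S, p)) <| by
    have himage : t.image Nat.primeFactors ⊆ (t.biUnion Nat.primeFactors).powerset :=
      image_subset_iff.mpr fun m hm => mem_powerset.mpr (subset_biUnion_of_mem _ hm)
    rw [← sum_subset himage, sum_image, ← hsum]
    · refine sum_congr rfl fun m hm => ?_
      rw [hprod m hm, Rat.smul_def]
    · intro m hm m' hm' h
      rw [← hprod m hm, ← hprod m' hm', show m.primeFactors = m'.primeFactors from h]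
    · intro S hS hSt
      rw [hg _ fun hSt' => hSt (mem_image.mpr ⟨_, hSt', Nat.primeFactors_prod fun p hp =>
        hP p (mem_powerset.mp hS hp)⟩), Rat.cast_zero, zero_mul]
  intro m hm
  simpa [hprod m hm] using key _ (mem_powerset.mpr (subset_biUnion_of_mem _ hm))

theorem linearIndepOn_sqrt_of_not_isSquare_mul {ι : Type*} {f : ι → ℕ} {s : Set ι}
    (hf0 : ∀ i ∈ s, f i ≠ 0) (hf : s.Pairwise fun i j => ¬IsSquare (f i * f j)) :
    LinearIndepOn ℚ (fun i => √(f i : ℝ)) s := by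
  choose a b hab ha using fun i => Nat.sq_mul_squarefree (f i)
  have hb : ∀ i ∈ s, b i ≠ 0 := fun i hi h => hf0 i hi (by rw [← hab, h]; ring)
  have hinj : Set.InjOn a s := fun i hi j hj h => by
    by_contra hij
    refine hf hi hj hij ⟨b i * b j * a j, ?_⟩
    rw [← hab i, ← hab j, h]
    ring
  have hlin : LinearIndepOn ℚ (fun i => √(a i : ℝ)) s :=
    (linearIndepOn_sqrt_squarefree.mono (Set.image_subset_iff.mpr fun i _ => ha i)).comp_of_image
      hinj
  rw [linearIndepOn_iff''] at hlin ⊢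
  intro t g hts hg hsum
  have hsqrt : ∀ i, √(f i : ℝ) = b i * √(a i : ℝ) := fun i => by
    rw [← hab, Nat.cast_mul, Nat.cast_pow, sqrt_mul (by positivity), sqrt_sq (by positivity)]
  have hgb := hlin t (fun i => g i * b i) hts (fun i hi => by simp [hg i hi]) <| by
    rw [← hsum]
    refine sum_congr rfl fun i _ => ?_
    simp only [Rat.smul_def, hsqrt, Rat.cast_mul, Rat.cast_natCast]
    ring
  intro i hi
  exact (mul_eq_zero.mp (hgb i hi)).resolve_right (by exact_mod_cast hb i (hts hi))

theorem not_isSquare_mul_sq_add {Q a b : ℕ} (hab : a ≠ b) (ha : a ≤ Q) (hb : b ≤ Q) :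
    ¬IsSquare ((Q ^ 2 + a) * (Q ^ 2 + b)) := by
  wlog h : a < b generalizing a b
  · rw [mul_comm]; exact this hab.symm hb ha (by omega)
  rintro ⟨k, hk⟩
  -- with `X = 2Q² + a + b`: `(2k)² = X² - (b - a)²` and `0 < (b - a)² < 2X - 1`,
  -- so `X - 1 < 2k < X`
  have hX : ((2 * k : ℕ) : ℤ) ^ 2 = (2 * Q ^ 2 + a + b : ℤ) ^ 2 - ((b : ℤ) - a) ^ 2 := by
    push_cast
    linear_combination (-4 : ℤ) * (by exact_mod_cast hk : ((Q : ℤ) ^ 2 + a) * (Q ^ 2 + b) = k * k)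
  have hd : ((b : ℤ) - a) ^ 2 ≤ (Q : ℤ) ^ 2 :=
    pow_le_pow_left₀ (by omega) (by omega) 2
  have hlt : ((2 * k : ℕ) : ℤ) < 2 * Q ^ 2 + a + b :=
    lt_of_pow_lt_pow_left₀ 2 (by positivity) (by nlinarith)
  have hle : ((2 * k : ℕ) : ℤ) ^ 2 ≤ (2 * Q ^ 2 + a + b - 1 : ℤ) ^ 2 :=
    pow_le_pow_left₀ (by positivity) (by omega) 2
  nlinarith

theorem LinearIndepOn.eq_of_sum_eq {ι R M : Type*} [Ring R] [Nontrivial R] [AddCommGroup M]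
    [Module R M] {v : ι → M} {s : Set ι} (hv : LinearIndepOn R v s) {A B : Finset ι}
    (hA : ↑A ⊆ s) (hB : ↑B ⊆ s) (h : ∑ i ∈ A, v i = ∑ i ∈ B, v i) : A = B := by
  classical
  have hcoeff := linearIndepOn_iff'.mp hv (A ∪ B)
    (fun i => (if i ∈ A then 1 else 0) - (if i ∈ B then 1 else 0)) (by simp [hA, hB]) <| by
      simp only [sub_smul, ite_smul, one_smul, zero_smul, sum_sub_distrib, sum_ite_mem,
        union_inter_cancel_left, union_inter_cancel_right, h, sub_self]
  ext i
  have := hcoeff i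
  by_cases hiA : i ∈ A <;> by_cases hiB : i ∈ B <;> simp_all

theorem linearIndepOn_sqrt_sq_add_sq {Q N : ℕ} (hN : N ^ 2 ≤ Q) :
    LinearIndepOn ℚ (fun d : ℕ => √((Q ^ 2 + d ^ 2 : ℕ) : ℝ)) (Set.Icc 1 N) := by
  refine linearIndepOn_sqrt_of_not_isSquare_mul
    (fun d hd => (Nat.add_pos_right _ (pow_pos hd.1 2)).ne') fun s hs t ht hst => ?_
  exact not_isSquare_mul_sq_add ((Nat.pow_left_injective two_ne_zero).ne hst)
    ((Nat.pow_le_pow_left hs.2 2).trans hN) ((Nat.pow_le_pow_left ht.2 2).trans hN)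

theorem norm_uPt_sub_vPt (n i j : ℕ) :
    ‖uPt i - vPt n j‖ = √(((n : ℝ) ^ 4) ^ 2 + ((j : ℝ) * n - i) ^ 2) := by
  rw [EuclideanSpace.norm_eq, Fin.sum_univ_two]
  simp only [Fin.isValue, uPt, mk2, WithLp.equiv_symm_apply, vPt, PiLp.sub_apply,
    Matrix.cons_val_zero, zero_sub, norm_neg, norm_pow, RCLike.norm_natCast, Matrix.cons_val_one,
    Matrix.cons_val_fin_one, norm_eq_abs, sq_abs]
  ring_nf

def gap (n : ℕ) (i j : Fin n) : ℕ := (j + 1) * n - i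

theorem gap_eq_finProdFinEquiv {n : ℕ} (i j : Fin n) :
    gap n i j = finProdFinEquiv (j, i.rev) + 1 := by
  rw [gap, finProdFinEquiv_apply_val]
  dsimp only
  rw [Fin.val_rev, add_one_mul, mul_comm n]
  have := i.isLt
  omega

theorem gap_mem_Icc {n : ℕ} (i j : Fin n) : gap n i j ∈ Set.Icc 1 (n ^ 2) := by
  rw [gap_eq_finProdFinEquiv, sq]
  exact ⟨Nat.le_add_left 1 _, (finProdFinEquiv (j, i.rev)).isLt⟩

theorem gap_injective {n : ℕ} {i j i' j' : Fin n} (h : gap n i j = gap n i' j') :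
    i = i' ∧ j = j' := by
  rw [gap_eq_finProdFinEquiv, gap_eq_finProdFinEquiv, add_left_inj, Fin.val_inj,
    finProdFinEquiv.apply_eq_iff_eq, Prod.mk.injEq, Fin.rev_inj] at h
  exact h.symm

theorem natCast_gap {n : ℕ} (i j : Fin n) : (gap n i j : ℝ) = ((j : ℝ) + 1) * n - i := by
  have hle : (i : ℕ) ≤ (j + 1) * n := i.isLt.le.trans (Nat.le_mul_of_pos_left n j.succ_pos)
  rw [gap, Nat.cast_sub hle, Nat.cast_mul, Nat.cast_succ]

def matchGaps (n : ℕ) (σ : Equiv.Perm (Fin n)) : Finset ℕ :=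
  univ.image fun i => gap n i (σ i)

theorem coe_matchGaps_subset {n : ℕ} (σ : Equiv.Perm (Fin n)) :
    ↑(matchGaps n σ) ⊆ Set.Icc 1 (n ^ 2) := by
  simpa [matchGaps, Set.subset_def] using fun i => gap_mem_Icc i (σ i)

theorem matchWeight_eq_sum_matchGaps (n : ℕ) (σ : Equiv.Perm (Fin n)) :
    matchWeight n σ = ∑ d ∈ matchGaps n σ, √(((n ^ 4) ^ 2 + d ^ 2 : ℕ) : ℝ) := by
  rw [matchGaps, sum_image fun i _ i' _ h => (gap_injective h).1]
  refine sum_congr rfl fun i _ => ?_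
  rw [norm_uPt_sub_vPt]
  push_cast [natCast_gap]
  ring_nf

theorem matchGaps_injective (n : ℕ) : Function.Injective (matchGaps n) := by
  intro σ τ h
  ext i : 1
  have hmem : gap n i (σ i) ∈ matchGaps n τ := h ▸ mem_image_of_mem _ (mem_univ i)
  obtain ⟨i', -, hi'⟩ := mem_image.mp hmem
  obtain ⟨rfl, hτσ⟩ := gap_injective hi'
  exact hτσ.symm

theorem stmt_4_general (n : ℕ) (σ τ : Equiv.Perm (Fin n)) (hστ : σ ≠ τ) :
    matchWeight n σ ≠ matchWeight n τ := by
  intro h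
  have hlin := linearIndepOn_sqrt_sq_add_sq (Q := n ^ 4) (N := n ^ 2) (le_of_eq (by ring))
  refine hστ (matchGaps_injective n (hlin.eq_of_sum_eq (coe_matchGaps_subset σ)
    (coe_matchGaps_subset τ) ?_))
  rwa [← matchWeight_eq_sum_matchGaps, ← matchWeight_eq_sum_matchGaps]

/-- In Construction 1, all perfect matchings have pairwise distinct weights. -/
theorem stmt_4 (n : ℕ) (hn : 1 ≤ n) (σ τ : Equiv.Perm (Fin n)) (hστ : σ ≠ τ) :
    matchWeight n σ ≠ matchWeight n τ :=
  stmt_4_general n σ τ hστ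
end

section
/- Let n ≥ 1 be an integer and set q = n⁴. If Δ and Δ' are integers with 1 ≤ Δ < Δ' ≤ n², then the integer (q² + Δ²)(q² + Δ'²) is not the square of an integer; consequently, the real numbers √(q² + Δ²) and √(q² + Δ'²) are linearly independent over ℚ. -/
/-!
Write `c = q²`. Four times `(c + Δ²)(c + Δ'²)` equals `N² - D²` with `N = 2c + Δ² + Δ'²` and
`D = Δ'² - Δ²`. The condition `D² < 2N - 1` rearranges to `((Δ' - Δ)² - 1)((Δ' + Δ)² - 1) < 4c`,
which holds for `c = n⁸` as soon as `Δ < Δ' ≤ n²`; then four times the product lies strictly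
between `(N - 1)²` and `N²`, so the product is not a square.
Linear independence follows: from `a √A + b √B = 0` with `a ≠ 0`, multiplying by `√B` shows that
`√(AB)` is rational, so `AB` would be a square.
-/

theorem Int.not_isSquare_sq_sub_sq {N D : ℤ} (hD : D ≠ 0) (hDN : D ^ 2 < 2 * N - 1) :
    ¬ IsSquare (N ^ 2 - D ^ 2) := by
  rintro ⟨s, hs⟩
  have hD2 : 0 < D ^ 2 := by positivity
  have hN : 1 < N := by omega
  have lower : (N - 1) ^ 2 < s ^ 2 := by nlinarith
  have upper : s ^ 2 < N ^ 2 := by nlinarith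
  rw [sq_lt_sq, abs_of_pos (by omega : 0 < N - 1)] at lower
  rw [sq_lt_sq, abs_of_pos (by omega : 0 < N)] at upper
  omega

theorem Int.not_isSquare_add_sq_mul_add_sq {c a b : ℤ} (hab : a ^ 2 ≠ b ^ 2)
    (hc : ((b - a) ^ 2 - 1) * ((b + a) ^ 2 - 1) < 4 * c) :
    ¬ IsSquare ((c + a ^ 2) * (c + b ^ 2)) := by
  rintro ⟨t, ht⟩
  refine Int.not_isSquare_sq_sub_sq (N := 2 * c + a ^ 2 + b ^ 2) (D := b ^ 2 - a ^ 2)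
    (sub_ne_zero.mpr hab.symm) (by nlinarith) ⟨2 * t, ?_⟩
  linear_combination 4 * ht

theorem sub_sq_sub_one_mul_add_sq_sub_one_lt {n : ℕ} {Δ Δ' : ℤ} (h1 : 1 ≤ Δ) (h2 : Δ < Δ')
    (h3 : Δ' ≤ (n : ℤ) ^ 2) :
    ((Δ' - Δ) ^ 2 - 1) * ((Δ' + Δ) ^ 2 - 1) < 4 * ((n : ℤ) ^ 4) ^ 2 := by
  have hdiff : (Δ' - Δ) ^ 2 - 1 < (n : ℤ) ^ 4 := by nlinarith
  have hsum : (Δ' + Δ) ^ 2 - 1 < 4 * (n : ℤ) ^ 4 := by nlinarith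
  have hdiff0 : 0 ≤ (Δ' - Δ) ^ 2 - 1 := by nlinarith
  calc ((Δ' - Δ) ^ 2 - 1) * ((Δ' + Δ) ^ 2 - 1)
      ≤ ((Δ' - Δ) ^ 2 - 1) * (4 * (n : ℤ) ^ 4) := by gcongr
    _ < (n : ℤ) ^ 4 * (4 * (n : ℤ) ^ 4) := by gcongr; nlinarith
    _ = 4 * ((n : ℤ) ^ 4) ^ 2 := by ring

theorem Int.eq_zero_of_rat_mul_sqrt_add_rat_mul_sqrt_eq_zero {A B : ℤ} (hA : 0 ≤ A) (hB : 0 < B)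
    (hAB : ¬ IsSquare (A * B)) {a b : ℚ}
    (h : (a : ℝ) * √(A : ℝ) + (b : ℝ) * √(B : ℝ) = 0) : a = 0 ∧ b = 0 := by
  have hB' : (0 : ℝ) < B := by exact_mod_cast hB
  have hirr : Irrational √((A : ℝ) * B) := by
    exact_mod_cast (irrational_sqrt_intCast_iff_of_nonneg (mul_nonneg hA hB.le)).mpr hAB
  have hmul : (a : ℝ) * √((A : ℝ) * B) + b * B = 0 := by
    rw [Real.sqrt_mul (by exact_mod_cast hA)]
    linear_combination √(B : ℝ) * h - (b : ℝ) * Real.mul_self_sqrt hB'.le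
  have ha : a = 0 := by
    by_contra ha
    have hrat : √((A : ℝ) * B) = -b * B / a := by
      rw [eq_div_iff (by exact_mod_cast ha)]
      linear_combination hmul
    exact hirr ⟨-b * B / a, by push_cast; exact hrat.symm⟩
  subst ha
  simpa [(Real.sqrt_pos.mpr hB').ne'] using h

theorem stmt_5_general (n : ℕ) (Δ Δ' : ℤ)
    (h1 : 1 ≤ Δ) (h2 : Δ < Δ') (h3 : Δ' ≤ (n : ℤ) ^ 2) :
    (¬ ∃ t : ℤ, (((n : ℤ) ^ 4) ^ 2 + Δ ^ 2) * (((n : ℤ) ^ 4) ^ 2 + Δ' ^ 2) = t ^ 2) ∧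
    (∀ a b : ℚ,
      (a : ℝ) * Real.sqrt (((n : ℝ) ^ 4) ^ 2 + (Δ : ℝ) ^ 2)
        + (b : ℝ) * Real.sqrt (((n : ℝ) ^ 4) ^ 2 + (Δ' : ℝ) ^ 2) = 0 →
      a = 0 ∧ b = 0) := by
  have hsq : ¬ IsSquare ((((n : ℤ) ^ 4) ^ 2 + Δ ^ 2) * (((n : ℤ) ^ 4) ^ 2 + Δ' ^ 2)) :=
    Int.not_isSquare_add_sq_mul_add_sq (by nlinarith)
      (sub_sq_sub_one_mul_add_sq_sub_one_lt h1 h2 h3)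
  refine ⟨fun ⟨t, ht⟩ => hsq ⟨t, by rw [ht, sq]⟩, fun a b h => ?_⟩
  exact Int.eq_zero_of_rat_mul_sqrt_add_rat_mul_sqrt_eq_zero (by positivity) (by nlinarith) hsq
    (by exact_mod_cast h)

/-- For `q = n⁴` and integers `1 ≤ Δ < Δ' ≤ n²`, the integer `(q² + Δ²)(q² + Δ'²)` is not a
perfect square; consequently `√(q² + Δ²)` and `√(q² + Δ'²)` are linearly independent over `ℚ`. -/
theorem stmt_5 (n : ℕ) (hn : 1 ≤ n) (Δ Δ' : ℤ)
    (h1 : 1 ≤ Δ) (h2 : Δ < Δ') (h3 : Δ' ≤ (n : ℤ) ^ 2) :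
    (¬ ∃ t : ℤ, (((n : ℤ) ^ 4) ^ 2 + Δ ^ 2) * (((n : ℤ) ^ 4) ^ 2 + Δ' ^ 2) = t ^ 2) ∧
    (∀ a b : ℚ,
      (a : ℝ) * Real.sqrt (((n : ℝ) ^ 4) ^ 2 + (Δ : ℝ) ^ 2)
        + (b : ℝ) * Real.sqrt (((n : ℝ) ^ 4) ^ 2 + (Δ' : ℝ) ^ 2) = 0 →
      a = 0 ∧ b = 0) :=
  stmt_5_general n Δ Δ' h1 h2 h3
end

section
/- Let N, n be positive integers and let A and B be disjoint sets of n points each in the integer grid {0,…,N}² ⊆ ℝ², with no three points of A ∪ B collinear. Let w* be the minimum of w(M) = Σ_{a∈A} ‖a − M(a)‖ over all bijections M : A → B. If M is a bijection A → B with w(M) < w* + 1/(8N⁴) (a near-minimum weight perfect matching), then no two edges of M cross: for all distinct a₁, a₂ ∈ A, the open segments from a₁ to M(a₁) and from a₂ to M(a₂) are disjoint. -/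
/-!
If the edges `a₁b₁` and `a₂b₂` of `M` crossed at `X`, swapping their endpoints would save at
least `1/(8N⁴)`. In the triangle `a₁Xb₂`, the identities
`(‖u‖ + ‖v‖ - ‖u + v‖)(‖u‖ + ‖v‖ + ‖u + v‖) = 2(‖u‖‖v‖ - ⟪u, v⟫)` and
`cross u v ^ 2 + ⟪u, v⟫ ^ 2 = ‖u‖² ‖v‖²` bound the triangle-inequality defect from below by
the product of the doubled areas of the triangles `a₂b₂a₁` and `a₁b₁b₂` over a cubic in the
side lengths. Those doubled areas are nonzero integers (lattice points, no three collinear)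
and the side lengths are at most `√2 N`, so each of the two triangles `a₁Xb₂`, `a₂Xb₁`
contributes at least `1/(16N⁴)`.
-/

open scoped BigOperators

attribute [local instance] Classical.propDecidable

/-- `p` is a point of the integer grid `{0,…,N}² ⊆ ℝ²`. -/
def OnGrid (N : ℕ) (p : EuclideanSpace ℝ (Fin 2)) : Prop :=
  ∀ i : Fin 2, ∃ m : ℕ, m ≤ N ∧ p i = (m : ℝ)

/-- The Euclidean weight of a perfect matching (bijection) `M` between
two finite point sets `A` and `B` in the plane. -/
noncomputable def ewWeight (A B : Finset (EuclideanSpace ℝ (Fin 2)))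
    (M : {x // x ∈ A} → {y // y ∈ B}) : ℝ :=
  ∑ a : {x // x ∈ A},
    ‖(a : EuclideanSpace ℝ (Fin 2)) - (M a : EuclideanSpace ℝ (Fin 2))‖

local notation "ℝ²" => EuclideanSpace ℝ (Fin 2)

def cross (u v : ℝ²) : ℝ := u 0 * v 1 - u 1 * v 0

theorem cross_smul_smul (a b : ℝ) (u v : ℝ²) : cross (a • u) (b • v) = a * b * cross u v := by
  simp only [cross, PiLp.smul_apply, smul_eq_mul]
  ring

theorem cross_sq_add_inner_sq (u v : ℝ²) :
    cross u v ^ 2 + inner ℝ u v ^ 2 = ‖u‖ ^ 2 * ‖v‖ ^ 2 := by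
  simp only [cross, EuclideanSpace.real_norm_sq_eq, PiLp.inner_apply, Fin.sum_univ_two,
    RCLike.inner_apply, conj_trivial]
  ring

theorem cross_sq_le_mul_norm_add_norm_sub_norm_add (u v : ℝ²) :
    cross u v ^ 2 ≤ 2 * (‖u‖ * ‖v‖) * (‖u‖ + ‖v‖) * (‖u‖ + ‖v‖ - ‖u + v‖) := by
  have h_inner := real_inner_le_norm u v
  have h_tri := norm_add_le u v
  have h_add : (‖u‖ + ‖v‖ - ‖u + v‖) * (‖u‖ + ‖v‖ + ‖u + v‖) =
      2 * (‖u‖ * ‖v‖ - inner ℝ u v) := by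
    linear_combination -(norm_add_sq_real u v)
  calc cross u v ^ 2 = (‖u‖ * ‖v‖ - inner ℝ u v) * (‖u‖ * ‖v‖ + inner ℝ u v) := by
        linear_combination cross_sq_add_inner_sq u v
    _ ≤ (‖u‖ * ‖v‖ - inner ℝ u v) * (2 * (‖u‖ * ‖v‖)) := by
        gcongr
        linarith
    _ = (‖u‖ + ‖v‖ - ‖u + v‖) * (‖u‖ + ‖v‖ + ‖u + v‖) * (‖u‖ * ‖v‖) := by
        rw [h_add]; ring
    _ ≤ (‖u‖ + ‖v‖ - ‖u + v‖) * (2 * (‖u‖ + ‖v‖)) * (‖u‖ * ‖v‖) := by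
        gcongr
        linarith
    _ = _ := by ring

-- `⟪u, v⟫ • u + cross u v • u⊥ = ‖u‖² • v`, with `u⊥ = (-u 1, u 0)`.
theorem exists_eq_smul_of_cross_eq_zero {u v : ℝ²} (hu : u ≠ 0) (h : cross u v = 0) :
    ∃ r : ℝ, v = r • u := by
  have hu' : u 0 ^ 2 + u 1 ^ 2 ≠ 0 := by
    rwa [← Fin.sum_univ_two (fun i => u i ^ 2), ← EuclideanSpace.real_norm_sq_eq,
      pow_ne_zero_iff two_ne_zero, norm_ne_zero_iff]
  refine ⟨(u 0 * v 0 + u 1 * v 1) / (u 0 ^ 2 + u 1 ^ 2), ?_⟩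
  ext i
  fin_cases i
  all_goals
    simp only [cross] at h
    simp only [Fin.zero_eta, Fin.mk_one, PiLp.smul_apply, smul_eq_mul]
    field_simp
  · linear_combination -u 1 * h
  · linear_combination u 0 * h

theorem collinear_of_cross_sub_eq_zero {P Q R : ℝ²} (h : cross (Q - P) (R - P) = 0) :
    Collinear ℝ ({P, Q, R} : Set ℝ²) := by
  by_cases hPQ : Q - P = 0
  · rw [sub_eq_zero.mp hPQ, Set.insert_eq_of_mem (Set.mem_insert _ _)]
    exact collinear_pair ℝ P R
  obtain ⟨r, hr⟩ := exists_eq_smul_of_cross_eq_zero hPQ h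
  have hR : R ∈ line[ℝ, P, Q] := by
    convert AffineMap.lineMap_mem_affineSpan_pair r P Q
    rw [AffineMap.lineMap_apply, vsub_eq_sub, vadd_eq_add, ← hr, sub_add_cancel]
  rw [Set.pair_comm, Set.insert_comm]
  exact collinear_insert_of_mem_affineSpan_pair hR

theorem one_le_abs_cross_sub_of_onGrid {N : ℕ} {P Q R : ℝ²}
    (hP : OnGrid N P) (hQ : OnGrid N Q) (hR : OnGrid N R)
    (hcol : ¬ Collinear ℝ ({P, Q, R} : Set ℝ²)) :
    1 ≤ |cross (Q - P) (R - P)| := by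
  obtain ⟨p₀, -, hp₀⟩ := hP 0
  obtain ⟨p₁, -, hp₁⟩ := hP 1
  obtain ⟨q₀, -, hq₀⟩ := hQ 0
  obtain ⟨q₁, -, hq₁⟩ := hQ 1
  obtain ⟨r₀, -, hr₀⟩ := hR 0
  obtain ⟨r₁, -, hr₁⟩ := hR 1
  have hz : cross (Q - P) (R - P) =
      (((q₀ - p₀) * (r₁ - p₁) - (q₁ - p₁) * (r₀ - p₀) : ℤ) : ℝ) := by
    simp only [cross, PiLp.sub_apply, hp₀, hp₁, hq₀, hq₁, hr₀, hr₁]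
    push_cast
    ring
  have h_ne := mt collinear_of_cross_sub_eq_zero hcol
  rw [hz] at h_ne ⊢
  rw [← Int.cast_abs, ← Int.cast_one, Int.cast_le]
  exact Int.one_le_abs (by exact_mod_cast h_ne)

theorem OnGrid.dist_sq_le {N : ℕ} {p q : ℝ²} (hp : OnGrid N p) (hq : OnGrid N q) :
    dist p q ^ 2 ≤ 2 * (N : ℝ) ^ 2 := by
  have hcoord : ∀ i, (p i - q i) ^ 2 ≤ (N : ℝ) ^ 2 := by
    intro i
    obtain ⟨m, hm, hpm⟩ := hp i
    obtain ⟨m', hm', hqm⟩ := hq i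
    rw [hpm, hqm]
    apply sq_le_sq' <;> linarith [(Nat.cast_le (α := ℝ)).mpr hm, (Nat.cast_le (α := ℝ)).mpr hm',
      (Nat.cast_nonneg m : (0 : ℝ) ≤ m), (Nat.cast_nonneg m' : (0 : ℝ) ≤ m')]
  rw [dist_eq_norm, EuclideanSpace.real_norm_sq_eq, Fin.sum_univ_two]
  simp only [PiLp.sub_apply]
  linarith [hcoord 0, hcoord 1]

theorem abs_cross_mul_abs_cross_le_of_mem_openSegment {a₁ b₁ a₂ b₂ X : ℝ²}
    (hX₁ : X ∈ openSegment ℝ a₁ b₁) (hX₂ : X ∈ openSegment ℝ a₂ b₂) :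
    |cross (b₂ - a₂) (a₁ - a₂)| * |cross (b₁ - a₁) (b₂ - a₁)| ≤
      2 * (dist a₁ b₁ * dist a₂ b₂) * (dist a₁ X + dist X b₂) *
        (dist a₁ X + dist X b₂ - dist a₁ b₂) := by
  rw [openSegment_eq_image_lineMap] at hX₁ hX₂
  obtain ⟨t, ⟨ht₀, ht₁⟩, hXt⟩ := hX₁
  obtain ⟨s, ⟨hs₀, hs₁⟩, hXs⟩ := hX₂
  rw [AffineMap.lineMap_apply, vsub_eq_sub, vadd_eq_add] at hXt hXs
  have hv : X - a₁ = t • (b₁ - a₁) := by rw [← hXt]; abel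
  have hw : b₂ - X = (1 - s) • (b₂ - a₂) := by rw [← hXs]; module
  set D := cross (b₁ - a₁) (b₂ - a₂)
  have hI₁ : cross (b₂ - a₂) (a₁ - a₂) = t * D := by
    rw [show a₁ - a₂ = s • (b₂ - a₂) - t • (b₁ - a₁) by
      linear_combination (norm := module) hXt - hXs]
    simp only [D, cross, PiLp.sub_apply, PiLp.smul_apply, smul_eq_mul]
    ring
  have hI₂ : cross (b₁ - a₁) (b₂ - a₁) = (1 - s) * D := by
    rw [show b₂ - a₁ = t • (b₁ - a₁) + (1 - s) • (b₂ - a₂) by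
      linear_combination (norm := module) hXs - hXt]
    simp only [D, cross, PiLp.add_apply, PiLp.sub_apply, PiLp.smul_apply, smul_eq_mul]
    ring
  have hts : 0 < t * (1 - s) := mul_pos ht₀ (by linarith)
  have hcross : cross (X - a₁) (b₂ - X) = t * (1 - s) * D := by
    rw [hv, hw, cross_smul_smul]
  have hnorms : ‖X - a₁‖ * ‖b₂ - X‖ = t * (1 - s) * (‖b₁ - a₁‖ * ‖b₂ - a₂‖) := by
    rw [hv, hw, norm_smul, norm_smul, Real.norm_of_nonneg ht₀.le,
      Real.norm_of_nonneg (by linarith : (0 : ℝ) ≤ 1 - s)]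
    ring
  have hdefect := cross_sq_le_mul_norm_add_norm_sub_norm_add (X - a₁) (b₂ - X)
  rw [sub_add_sub_cancel', hcross, hnorms] at hdefect
  rw [hI₁, hI₂, ← abs_mul, show t * D * ((1 - s) * D) = t * (1 - s) * D ^ 2 by ring,
    abs_of_nonneg (by positivity), dist_comm a₁ X, dist_comm a₁ b₂, dist_comm X b₂,
    dist_comm a₁ b₁, dist_comm a₂ b₂]
  simp only [dist_eq_norm]
  exact le_of_mul_le_mul_left (by linear_combination hdefect) hts

theorem dist_add_le_dist_add_dist_of_mem_openSegment {N : ℕ} (hN : 0 < N) {a₁ b₁ a₂ b₂ X : ℝ²}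
    (ha₁ : OnGrid N a₁) (hb₁ : OnGrid N b₁) (ha₂ : OnGrid N a₂) (hb₂ : OnGrid N b₂)
    (hc₁ : ¬ Collinear ℝ ({a₂, b₂, a₁} : Set ℝ²)) (hc₂ : ¬ Collinear ℝ ({a₁, b₁, b₂} : Set ℝ²))
    (hX₁ : X ∈ openSegment ℝ a₁ b₁) (hX₂ : X ∈ openSegment ℝ a₂ b₂) :
    dist a₁ b₂ + 1 / (16 * (N : ℝ) ^ 4) ≤ dist a₁ X + dist X b₂ := by
  have h_one : 1 ≤ |cross (b₂ - a₂) (a₁ - a₂)| * |cross (b₁ - a₁) (b₂ - a₁)| :=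
    one_le_mul_of_one_le_of_one_le
      (one_le_abs_cross_sub_of_onGrid ha₂ hb₂ ha₁ hc₁)
      (one_le_abs_cross_sub_of_onGrid ha₁ hb₁ hb₂ hc₂)
  have h_key := abs_cross_mul_abs_cross_le_of_mem_openSegment hX₁ hX₂
  have hN1 : (1 : ℝ) ≤ N := by exact_mod_cast hN
  have hL₁ := ha₁.dist_sq_le hb₁
  have hL₂ := ha₂.dist_sq_le hb₂
  have hX₁' := dist_add_dist_of_mem_segment (openSegment_subset_segment ℝ _ _ hX₁)
  have hX₂' := dist_add_dist_of_mem_segment (openSegment_subset_segment ℝ _ _ hX₂)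
  have h_bound : 2 * (dist a₁ b₁ * dist a₂ b₂) * (dist a₁ X + dist X b₂) ≤ 16 * (N : ℝ) ^ 4 := by
    have hL₁' : dist a₁ b₁ ≤ 2 * N := by nlinarith [dist_nonneg (x := a₁) (y := b₁)]
    have hL₂' : dist a₂ b₂ ≤ 2 * N := by nlinarith [dist_nonneg (x := a₂) (y := b₂)]
    have hL₁₂ : dist a₁ b₁ * dist a₂ b₂ ≤ 2 * N ^ 2 := by
      nlinarith [sq_nonneg (dist a₁ b₁ - dist a₂ b₂)]
    have hsum : dist a₁ X + dist X b₂ ≤ 4 * N := by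
      linarith [dist_nonneg (x := X) (y := b₁), dist_nonneg (x := a₂) (y := X)]
    have hN34 : (N : ℝ) ^ 3 ≤ N ^ 4 := pow_le_pow_right₀ hN1 (by norm_num)
    calc 2 * (dist a₁ b₁ * dist a₂ b₂) * (dist a₁ X + dist X b₂) ≤ 2 * (2 * N ^ 2) * (4 * N) := by
          gcongr
      _ ≤ 16 * (N : ℝ) ^ 4 := by linarith
  have h_defect : 0 ≤ dist a₁ X + dist X b₂ - dist a₁ b₂ := sub_nonneg.mpr (dist_triangle _ _ _)
  rw [← le_sub_iff_add_le', div_le_iff₀ (by positivity), mul_comm]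
  calc 1 ≤ _ := h_one.trans h_key
    _ ≤ _ := mul_le_mul_of_nonneg_right h_bound h_defect

theorem dist_add_dist_add_le_of_mem_openSegment {N : ℕ} (hN : 0 < N) {a₁ b₁ a₂ b₂ X : ℝ²}
    (ha₁ : OnGrid N a₁) (hb₁ : OnGrid N b₁) (ha₂ : OnGrid N a₂) (hb₂ : OnGrid N b₂)
    (hc₁ : ¬ Collinear ℝ ({a₂, b₂, a₁} : Set ℝ²)) (hc₂ : ¬ Collinear ℝ ({a₁, b₁, b₂} : Set ℝ²))
    (hc₃ : ¬ Collinear ℝ ({a₁, b₁, a₂} : Set ℝ²)) (hc₄ : ¬ Collinear ℝ ({a₂, b₂, b₁} : Set ℝ²))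
    (hX₁ : X ∈ openSegment ℝ a₁ b₁) (hX₂ : X ∈ openSegment ℝ a₂ b₂) :
    dist a₁ b₂ + dist a₂ b₁ + 1 / (8 * (N : ℝ) ^ 4) ≤ dist a₁ b₁ + dist a₂ b₂ := by
  have h₁ := dist_add_le_dist_add_dist_of_mem_openSegment hN ha₁ hb₁ ha₂ hb₂ hc₁ hc₂ hX₁ hX₂
  have h₂ := dist_add_le_dist_add_dist_of_mem_openSegment hN ha₂ hb₂ ha₁ hb₁ hc₃ hc₄ hX₂ hX₁
  have hX₁' := dist_add_dist_of_mem_segment (openSegment_subset_segment ℝ _ _ hX₁)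
  have hX₂' := dist_add_dist_of_mem_segment (openSegment_subset_segment ℝ _ _ hX₂)
  have : 1 / (8 * (N : ℝ) ^ 4) = 1 / (16 * (N : ℝ) ^ 4) + 1 / (16 * (N : ℝ) ^ 4) := by
    field_simp; norm_num
  linarith

theorem ewWeight_comp_swap {A B : Finset ℝ²} (M : {x // x ∈ A} → {y // y ∈ B})
    {a₁ a₂ : {x // x ∈ A}} (hne : a₁ ≠ a₂) :
    ewWeight A B (M ∘ Equiv.swap a₁ a₂) + (dist (a₁ : ℝ²) (M a₁) + dist (a₂ : ℝ²) (M a₂)) =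
      ewWeight A B M + (dist (a₁ : ℝ²) (M a₂) + dist (a₂ : ℝ²) (M a₁)) := by
  have h_split : ∀ f : {x // x ∈ A} → ℝ, ∑ a, f a = f a₁ + f a₂ + ∑ a ∈ {a₁, a₂}ᶜ, f a := by
    intro f
    rw [← Finset.sum_pair hne, Finset.sum_add_sum_compl]
  have h_rest : ∀ a ∈ ({a₁, a₂} : Finset _)ᶜ, (M ∘ Equiv.swap a₁ a₂) a = M a := by
    intro a ha
    simp only [Finset.mem_compl, Finset.mem_insert, Finset.mem_singleton, not_or] at ha
    rw [Function.comp_apply, Equiv.swap_apply_of_ne_of_ne ha.1 ha.2]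
  simp only [ewWeight, ← dist_eq_norm]
  rw [h_split, h_split (fun a => dist _ _), Finset.sum_congr rfl (fun a ha => by rw [h_rest a ha])]
  simp only [Function.comp_apply, Equiv.swap_apply_left, Equiv.swap_apply_right]
  ring

theorem stmt_9_general (N : ℕ) (hN : 0 < N)
    (A B : Finset (EuclideanSpace ℝ (Fin 2)))
    (hAB : Disjoint A B)
    (hgrid : ∀ p ∈ A ∪ B, OnGrid N p)
    (hcol : ∀ P ∈ A ∪ B, ∀ Q ∈ A ∪ B, ∀ R ∈ A ∪ B, P ≠ Q → P ≠ R → Q ≠ R →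
      ¬ Collinear ℝ ({P, Q, R} : Set (EuclideanSpace ℝ (Fin 2))))
    (wstar : ℝ)
    (hwstar : IsLeast {w : ℝ | ∃ M : {x // x ∈ A} → {y // y ∈ B},
      Function.Bijective M ∧ ewWeight A B M = w} wstar)
    (M : {x // x ∈ A} → {y // y ∈ B}) (hM : Function.Bijective M)
    (hnear : ewWeight A B M < wstar + 1 / (8 * (N : ℝ) ^ 4)) :
    ∀ a₁ a₂ : {x // x ∈ A}, a₁ ≠ a₂ →
      Disjoint
        (openSegment ℝ (a₁ : EuclideanSpace ℝ (Fin 2)) (M a₁ : EuclideanSpace ℝ (Fin 2)))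
        (openSegment ℝ (a₂ : EuclideanSpace ℝ (Fin 2)) (M a₂ : EuclideanSpace ℝ (Fin 2))) := by
  intro a₁ a₂ hne
  rw [Set.disjoint_left]
  intro X hX₁ hX₂
  have hA (a : {x // x ∈ A}) : (a : ℝ²) ∈ A ∪ B := Finset.mem_union_left _ a.2
  have hB (b : {y // y ∈ B}) : (b : ℝ²) ∈ A ∪ B := Finset.mem_union_right _ b.2
  have hAB' (a : {x // x ∈ A}) (b : {y // y ∈ B}) : (a : ℝ²) ≠ b :=
    fun h => Finset.disjoint_left.mp hAB a.2 (h ▸ b.2)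
  have hnc₁ {a a' : {x // x ∈ A}} (h : a ≠ a') :
      ¬ Collinear ℝ ({(a : ℝ²), (M a : ℝ²), (a' : ℝ²)} : Set ℝ²) :=
    hcol _ (hA a) _ (hB _) _ (hA a') (hAB' _ _) (Subtype.coe_injective.ne h) (hAB' _ _).symm
  have hnc₂ {a a' : {x // x ∈ A}} (h : a ≠ a') :
      ¬ Collinear ℝ ({(a : ℝ²), (M a : ℝ²), (M a' : ℝ²)} : Set ℝ²) :=
    hcol _ (hA a) _ (hB _) _ (hB _) (hAB' _ _) (hAB' _ _)
      (Subtype.coe_injective.ne (hM.1.ne h))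
  have h_gap := dist_add_dist_add_le_of_mem_openSegment hN (hgrid _ (hA a₁)) (hgrid _ (hB _))
    (hgrid _ (hA a₂)) (hgrid _ (hB _)) (hnc₁ hne.symm) (hnc₂ hne) (hnc₁ hne) (hnc₂ hne.symm) hX₁ hX₂
  have h_swap := ewWeight_comp_swap M hne
  have h_min := hwstar.2 ⟨_, hM.comp (Equiv.swap a₁ a₂).bijective, rfl⟩
  linarith

/-- For disjoint `n`-point sets `A, B` on the grid `{0,…,N}²` with no three points of
`A ∪ B` collinear: if `M` is a perfect matching with `w(M) < w* + 1/(8N⁴)`, where `w*` is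
the minimum weight of a perfect matching, then no two edges of `M` cross. -/
theorem stmt_9 (N n : ℕ) (hN : 0 < N) (hn : 0 < n)
    (A B : Finset (EuclideanSpace ℝ (Fin 2)))
    (hAB : Disjoint A B) (hcardA : A.card = n) (hcardB : B.card = n)
    (hgrid : ∀ p ∈ A ∪ B, OnGrid N p)
    (hcol : ∀ P ∈ A ∪ B, ∀ Q ∈ A ∪ B, ∀ R ∈ A ∪ B, P ≠ Q → P ≠ R → Q ≠ R →
      ¬ Collinear ℝ ({P, Q, R} : Set (EuclideanSpace ℝ (Fin 2))))
    (wstar : ℝ)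
    (hwstar : IsLeast {w : ℝ | ∃ M : {x // x ∈ A} → {y // y ∈ B},
      Function.Bijective M ∧ ewWeight A B M = w} wstar)
    (M : {x // x ∈ A} → {y // y ∈ B}) (hM : Function.Bijective M)
    (hnear : ewWeight A B M < wstar + 1 / (8 * (N : ℝ) ^ 4)) :
    ∀ a₁ a₂ : {x // x ∈ A}, a₁ ≠ a₂ →
      Disjoint
        (openSegment ℝ (a₁ : EuclideanSpace ℝ (Fin 2)) (M a₁ : EuclideanSpace ℝ (Fin 2)))
        (openSegment ℝ (a₂ : EuclideanSpace ℝ (Fin 2)) (M a₂ : EuclideanSpace ℝ (Fin 2))) :=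
  stmt_9_general N hN A B hAB hgrid hcol wstar hwstar M hM hnear
end

section
/- Let (x₁, y₁), …, (x_n, y_n) be integer points in the plane. Then there exists a real number K₀ > 0 such that for every real K ≥ K₀ and all pairwise distinct indices i, j, k ∈ {1, …, n}, the three perturbed points (x_i + i/K, y_i + i²/K), (x_j + j/K, y_j + j²/K), (x_k + k/K, y_k + k²/K) are not collinear. -/
/-- The perturbed point `(x_i + i/K, y_i + i²/K)` associated with the `i`-th integer point
`(x_i, y_i)` (indices run over `1, …, n`, realized as `(i : Fin n) + 1`). -/
noncomputable def pert (n : ℕ) (x y : Fin n → ℤ) (i : Fin n) (K : ℝ) :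
    EuclideanSpace ℝ (Fin 2) :=
  mk2 ((x i : ℝ) + ((i : ℕ) + 1 : ℝ) / K) ((y i : ℝ) + (((i : ℕ) + 1 : ℝ)) ^ 2 / K)

/-!
The collinearity determinant of the perturbed points `i, j, k` is `a + b/K + c/K²`, where `c` is
the collinearity determinant of the three points `(t, t²)` of the parabola, `t = i, j, k`, i.e. the
Vandermonde product `(j - i)(k - i)(k - j) ≠ 0`. Hence `K²` times the determinant is a nonzero
polynomial in `K`, which has only finitely many roots, and so the determinant is nonzero for all
large `K`. Since there are finitely many triples of indices, one threshold `K₀` serves them all.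
-/

open Filter Function

@[simp] lemma mk2_apply_zero (x y : ℝ) : mk2 x y 0 = x := rfl

@[simp] lemma mk2_apply_one (x y : ℝ) : mk2 x y 1 = y := rfl

/-- The determinant of the rows `(1, 1, 1)`, `(P₀, Q₀, R₀)`, `(P₁, Q₁, R₁)`. -/
def collinearityDet (P Q R : EuclideanSpace ℝ (Fin 2)) : ℝ :=
  (Q 0 - P 0) * (R 1 - P 1) - (Q 1 - P 1) * (R 0 - P 0)

lemma not_collinear_of_collinearityDet_ne_zero {P Q R : EuclideanSpace ℝ (Fin 2)}
    (h : collinearityDet P Q R ≠ 0) :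
    ¬ Collinear ℝ ({P, Q, R} : Set (EuclideanSpace ℝ (Fin 2))) := by
  rw [collinear_iff_of_mem (Set.mem_insert P _)]
  rintro ⟨v, hv⟩
  obtain ⟨r, rfl⟩ := hv Q (by simp)
  obtain ⟨s, rfl⟩ := hv R (by simp)
  apply h
  simp only [collinearityDet, vadd_eq_add, PiLp.add_apply, PiLp.smul_apply, smul_eq_mul]
  ring

lemma eventually_add_div_add_div_sq_ne_zero {a b c : ℝ} (hc : c ≠ 0) :
    ∀ᶠ K in atTop, a + b / K + c / K ^ 2 ≠ 0 := by
  open Polynomial in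
  have hp : (C a * X ^ 2 + C b * X + C c : ℝ[X]) ≠ 0 := by
    intro h
    apply hc
    simpa using congrArg (coeff · 0) h
  filter_upwards [eventually_gt_atTop 0,
    atTop_le_cofinite (Polynomial.finite_setOfPred_isRoot hp).eventually_cofinite_notMem]
    with K hK hroot h
  apply hroot
  simp only [IsRoot, eval_add, eval_mul, eval_C, eval_pow, eval_X]
  field_simp at h
  linarith

section ParabolaPerturb

variable {ι : Type*} (u v t : ι → ℝ)

noncomputable def parabolaPerturb (K : ℝ) (m : ι) : EuclideanSpace ℝ (Fin 2) :=
  mk2 (u m + t m / K) (v m + t m ^ 2 / K)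

lemma exists_collinearityDet_parabolaPerturb_eq (i j k : ι) :
    ∃ a b : ℝ, ∀ K : ℝ,
      collinearityDet (parabolaPerturb u v t K i) (parabolaPerturb u v t K j)
          (parabolaPerturb u v t K k) =
        a + b / K + (t j - t i) * (t k - t i) * (t k - t j) / K ^ 2 :=
  ⟨(u j - u i) * (v k - v i) - (v j - v i) * (u k - u i),
    (u j - u i) * (t k ^ 2 - t i ^ 2) + (t j - t i) * (v k - v i)
      - (v j - v i) * (t k - t i) - (t j ^ 2 - t i ^ 2) * (u k - u i),
    fun K => by simp only [collinearityDet, parabolaPerturb, mk2_apply_zero, mk2_apply_one]; ring⟩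

theorem eventually_not_collinear_parabolaPerturb {t} (ht : Injective t) {i j k : ι}
    (hij : i ≠ j) (hik : i ≠ k) (hjk : j ≠ k) :
    ∀ᶠ K in atTop, ¬ Collinear ℝ
      ({parabolaPerturb u v t K i, parabolaPerturb u v t K j, parabolaPerturb u v t K k} :
        Set (EuclideanSpace ℝ (Fin 2))) := by
  obtain ⟨a, b, hdet⟩ := exists_collinearityDet_parabolaPerturb_eq u v t i j k
  have hvandermonde : (t j - t i) * (t k - t i) * (t k - t j) ≠ 0 := by
    simp only [ne_eq, mul_eq_zero, sub_eq_zero, ht.eq_iff]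
    tauto
  filter_upwards [eventually_add_div_add_div_sq_ne_zero (a := a) (b := b) hvandermonde] with K hK
  exact not_collinear_of_collinearityDet_ne_zero (hdet K ▸ hK)

end ParabolaPerturb

lemma pert_eq_parabolaPerturb (n : ℕ) (x y : Fin n → ℤ) (i : Fin n) (K : ℝ) :
    pert n x y i K =
      parabolaPerturb (fun m => (x m : ℝ)) (fun m => (y m : ℝ)) (fun m => ((m : ℕ) + 1 : ℝ))
        K i :=
  rfl

/-- Given integer points `(x₁,y₁), …, (x_n,y_n)`, there is `K₀ > 0` such that for every
`K ≥ K₀`, no three of the perturbed points `(x_i + i/K, y_i + i²/K)` with pairwise distinct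
indices are collinear. -/
theorem stmt_15 (n : ℕ) (x y : Fin n → ℤ) :
    ∃ K₀ : ℝ, 0 < K₀ ∧ ∀ K : ℝ, K₀ ≤ K →
      ∀ i j k : Fin n, i ≠ j → i ≠ k → j ≠ k →
        ¬ Collinear ℝ
          ({pert n x y i K, pert n x y j K, pert n x y k K} :
            Set (EuclideanSpace ℝ (Fin 2))) := by
  have ht : Injective fun m : Fin n => ((m : ℕ) + 1 : ℝ) :=
    fun p q h => Fin.ext (by simpa using h)
  have h : ∀ᶠ K in atTop, ∀ i j k : Fin n, i ≠ j → i ≠ k → j ≠ k →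
      ¬ Collinear ℝ ({pert n x y i K, pert n x y j K, pert n x y k K} :
        Set (EuclideanSpace ℝ (Fin 2))) := by
    simp only [eventually_all, pert_eq_parabolaPerturb]
    exact fun i j k => eventually_not_collinear_parabolaPerturb _ _ ht
  obtain ⟨K₁, hK₁⟩ := eventually_atTop.1 h
  exact ⟨max K₁ 1, by positivity, fun K hK => hK₁ K (le_of_max_le_left hK)⟩
end
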